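/- arXiv:cs/0607082 — 2 statements merged into one kernel-verified Lean document; each statement's English description precedes it below -/
import Mathlib

section
/- Let b be a letter of an alphabet A and let u be a word over A not ending with the letter b. If ⊢*_{{u}} is not a well quasi-order on LL(u), then for every integer k ≥ 1 the relation ⊢*_{{u b^k}} is not a well quasi-order on LL(u b^k). -/
namespace ShuffleWqo

inductive AB : Type
  | a : AB
  | b : AB
  deriving DecidableEq

open AB

/-- The word `a^n`. -/
def wa (n : ℕ) : List AB := List.replicate n a

/-- The word `b^n`. -/
def wb (n : ℕ) : List AB := List.replicate n b

/-- Concatenation power of a word: `npow u e = u^e`. -/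
def npow (u : List AB) : ℕ → List AB
  | 0 => []
  | n + 1 => u ++ npow u n

/-- `Shuffle u v w` means `w` is a shuffle of `u` and `v`. -/
inductive Shuffle {α : Type*} : List α → List α → List α → Prop
  | nil : Shuffle [] [] []
  | left {x : α} {u v w : List α} : Shuffle u v w → Shuffle (x :: u) v (x :: w)
  | right {x : α} {u v w : List α} : Shuffle u v w → Shuffle u (x :: v) (x :: w)

/-- One derivation step: `w` is obtained from `v` by shuffling in a word of `I`. -/
def Derives {α : Type*} (I : Set (List α)) (v w : List α) : Prop :=
  ∃ u ∈ I, Shuffle v u w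

/-- The reflexive-transitive closure `⊢*_I`. -/
def DerivesStar {α : Type*} (I : Set (List α)) : List α → List α → Prop :=
  Relation.ReflTransGen (Derives I)

/-- The shuffle closure `LL(I)` of a set of words `I`. -/
def LL {α : Type*} (I : Set (List α)) : Set (List α) := { w | DerivesStar I [] w }

/-- `r` is a well quasi-order on the language `L`. -/
def IsWqoOn {α : Type*} (r : List α → List α → Prop) (L : Set (List α)) : Prop :=
  ∀ f : ℕ → List α, (∀ n, f n ∈ L) → ∃ i j, i < j ∧ r (f i) (f j)

section Aux

variable {α : Type*}

lemma shuffle_nil_left (v : List α) : Shuffle [] v v := by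
  induction v with
  | nil => exact Shuffle.nil
  | cons x t ih => exact Shuffle.right ih

lemma shuffle_comm {a b c : List α} (h : Shuffle a b c) : Shuffle b a c := by
  induction h with
  | nil => exact Shuffle.nil
  | left _ ih => exact Shuffle.right ih
  | right _ ih => exact Shuffle.left ih

lemma shuffle_append {a b c a' b' c' : List α} (h : Shuffle a b c) (h' : Shuffle a' b' c') :
    Shuffle (a ++ a') (b ++ b') (c ++ c') := by
  induction h with
  | nil => exact h'
  | left _ ih => exact Shuffle.left ih
  | right _ ih => exact Shuffle.right ih

lemma shuffle_concat (u v : List α) : Shuffle u v (u ++ v) := by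
  induction u with
  | nil => exact shuffle_nil_left v
  | cons x t ih => exact Shuffle.left ih

lemma shuffle_nil_right (v : List α) : Shuffle v [] v := by
  induction v with
  | nil => exact Shuffle.nil
  | cons x t ih => exact Shuffle.left ih

lemma shuffle_nil_left_eq {b c : List α} (h : Shuffle [] b c) : c = b := by
  generalize ha : ([] : List α) = a at h
  induction h with
  | nil => rfl
  | left _ _ => simp at ha
  | right _ ih => rw [ih ha]

lemma shuffle_nil_right_eq {a c : List α} (h : Shuffle a [] c) : c = a :=
  shuffle_nil_left_eq (shuffle_comm h)

lemma shuffle_perm {a b c : List α} (h : Shuffle a b c) : List.Perm c (a ++ b) := by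
  induction h with
  | nil => rfl
  | left _ ih => exact ih.cons _
  | right _ ih => exact (ih.cons _).trans List.perm_middle.symm

lemma shuffle_length {a b c : List α} (h : Shuffle a b c) :
    c.length = a.length + b.length := by
  simpa using (shuffle_perm h).length_eq

lemma shuffle_assoc1 {v t s z w : List α} (h1 : Shuffle v t s) (h2 : Shuffle s z w) :
    ∃ r, Shuffle t z r ∧ Shuffle v r w := by
  induction h2 generalizing v t with
  | nil =>
    cases h1
    exact ⟨[], Shuffle.nil, Shuffle.nil⟩
  | @left x s' z' w' _ ih =>
    cases h1 with
    | left h1' =>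
      obtain ⟨r, hr1, hr2⟩ := ih h1'
      exact ⟨r, hr1, Shuffle.left hr2⟩
    | right h1' =>
      obtain ⟨r, hr1, hr2⟩ := ih h1'
      exact ⟨x :: r, Shuffle.left hr1, Shuffle.right hr2⟩
  | @right x s' z' w' _ ih =>
    obtain ⟨r, hr1, hr2⟩ := ih h1
    exact ⟨x :: r, Shuffle.right hr1, Shuffle.right hr2⟩

lemma shuffle_assoc2 {a b c v w : List α} (h1 : Shuffle a b c) (h2 : Shuffle v c w) :
    ∃ s, Shuffle v a s ∧ Shuffle s b w := by
  obtain ⟨r, hr1, hr2⟩ := shuffle_assoc1 (shuffle_comm h1) (shuffle_comm h2)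
  exact ⟨r, shuffle_comm hr1, shuffle_comm hr2⟩

lemma shuffle_split {a b c : List α} (h : Shuffle a b c) :
    ∀ c₁ c₂, c = c₁ ++ c₂ → ∃ a₁ a₂ b₁ b₂, a = a₁ ++ a₂ ∧ b = b₁ ++ b₂ ∧
      Shuffle a₁ b₁ c₁ ∧ Shuffle a₂ b₂ c₂ := by
  induction h with
  | nil =>
    intro c₁ c₂ hc
    obtain ⟨h1, h2⟩ := List.append_eq_nil_iff.mp hc.symm
    exact ⟨[], [], [], [], rfl, rfl, by rw [h1]; exact Shuffle.nil, by rw [h2]; exact Shuffle.nil⟩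
  | @left x u v w hs ih =>
    intro c₁ c₂ hc
    cases c₁ with
    | nil =>
      have hc2 : c₂ = x :: w := by simpa using hc.symm
      exact ⟨[], x :: u, [], v, rfl, rfl, Shuffle.nil, by rw [hc2]; exact Shuffle.left hs⟩
    | cons y c₁' =>
      obtain ⟨hy, hw⟩ : x = y ∧ w = c₁' ++ c₂ := by simpa using hc
      obtain ⟨a₁, a₂, b₁, b₂, ha, hb, h1, h2⟩ := ih c₁' c₂ hw
      refine ⟨y :: a₁, a₂, b₁, b₂, by rw [ha, hy]; rfl, hb, Shuffle.left h1, h2⟩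
  | @right x u v w hs ih =>
    intro c₁ c₂ hc
    cases c₁ with
    | nil =>
      have hc2 : c₂ = x :: w := by simpa using hc.symm
      exact ⟨[], u, [], x :: v, rfl, rfl, Shuffle.nil, by rw [hc2]; exact Shuffle.right hs⟩
    | cons y c₁' =>
      obtain ⟨hy, hw⟩ : x = y ∧ w = c₁' ++ c₂ := by simpa using hc
      obtain ⟨a₁, a₂, b₁, b₂, ha, hb, h1, h2⟩ := ih c₁' c₂ hw
      refine ⟨a₁, a₂, y :: b₁, b₂, ha, by rw [hb, hy]; rfl, Shuffle.right h1, h2⟩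

lemma shuffle_reverse {a b c : List α} (h : Shuffle a b c) :
    Shuffle a.reverse b.reverse c.reverse := by
  induction h with
  | nil => exact Shuffle.nil
  | @left x u v w _ ih =>
    simpa using shuffle_append ih (Shuffle.left (x := x) Shuffle.nil)
  | @right x u v w _ ih =>
    simpa using shuffle_append ih (Shuffle.right (x := x) Shuffle.nil)

lemma shuffle_head? {a b c : List α} (h : Shuffle a b c) :
    c.head? = a.head? ∨ c.head? = b.head? := by
  cases h with
  | nil => left; rfl
  | left _ => left; rfl
  | right _ => right; rfl

lemma shuffle_getLast? {a b c : List α} (h : Shuffle a b c) :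
    c.getLast? = a.getLast? ∨ c.getLast? = b.getLast? := by
  have := shuffle_head? (shuffle_reverse h)
  simpa using this

/-- Iterated shuffle power. -/
def Pow (z : List α) : ℕ → List α → Prop
  | 0, t => t = []
  | n + 1, t => ∃ s, Pow z n s ∧ Shuffle s z t

lemma pow_length {z : List α} : ∀ {n t}, Pow z n t → t.length = n * z.length := by
  intro n
  induction n with
  | zero => intro t ht; rw [ht]; simp
  | succ m ih =>
    rintro t ⟨s, hs, hsh⟩
    rw [shuffle_length hsh, ih hs]
    ring

lemma derivesStar_to_pow {z v w : List α} (h : DerivesStar {z} v w) :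
    ∃ n t, Pow z n t ∧ Shuffle v t w := by
  induction h with
  | refl => exact ⟨0, [], rfl, shuffle_nil_right v⟩
  | @tail s w' _ hstep ih =>
    obtain ⟨n, t, hp, hsh⟩ := ih
    obtain ⟨z', hz', hsh'⟩ := hstep
    rw [Set.mem_singleton_iff] at hz'
    subst hz'
    obtain ⟨r, hr1, hr2⟩ := shuffle_assoc1 hsh hsh'
    exact ⟨n + 1, r, ⟨t, hp, hr1⟩, hr2⟩

lemma pow_to_derivesStar {z : List α} : ∀ {n t v w}, Pow z n t → Shuffle v t w →
    DerivesStar {z} v w := by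
  intro n
  induction n with
  | zero =>
    intro t v w ht hsh
    rw [ht] at hsh
    rw [shuffle_nil_right_eq hsh]
    exact Relation.ReflTransGen.refl
  | succ m ih =>
    rintro t v w ⟨s, hs, hsh'⟩ hsh
    obtain ⟨r, hr1, hr2⟩ := shuffle_assoc2 hsh' hsh
    exact Relation.ReflTransGen.tail (ih hs hr1) ⟨z, rfl, hr2⟩

variable {bb : α} {u : List α}

lemma pow_getLast (hlast : u.getLast? ≠ some bb) :
    ∀ {m w}, Pow u m w → w.getLast? ≠ some bb := by
  intro m
  induction m with
  | zero => intro w hw; rw [hw]; simp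
  | succ n ih =>
    rintro w ⟨s, hs, hsh⟩
    rcases shuffle_getLast? hsh with h | h
    · rw [h]; exact ih hs
    · rw [h]; exact hlast

lemma pow_lift {k : ℕ} : ∀ {m w}, Pow u m w →
    Pow (u ++ List.replicate k bb) m (w ++ List.replicate (k * m) bb) := by
  intro m
  induction m with
  | zero => intro w hw; rw [hw]; simp [Pow]
  | succ n ih =>
    rintro w ⟨s, hs, hsh⟩
    refine ⟨s ++ List.replicate (k * n) bb, ih hs, ?_⟩
    have : List.replicate (k * (n + 1)) bb =
        List.replicate (k * n) bb ++ List.replicate k bb := by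
      rw [← List.replicate_add, Nat.mul_succ]
    rw [this]
    exact shuffle_append hsh (shuffle_concat _ _)

lemma replicate_suffix_eq (hlast : u.getLast? ≠ some bb) {k L : ℕ} {c₁ : List α}
    (h : c₁ ++ List.replicate L bb = u ++ List.replicate k bb) :
    L ≤ k ∧ c₁ = u ++ List.replicate (k - L) bb := by
  by_cases hL : L ≤ k
  · refine ⟨hL, ?_⟩
    have h2 : u ++ List.replicate k bb = (u ++ List.replicate (k - L) bb) ++ List.replicate L bb := by
      rw [List.append_assoc, ← List.replicate_add]
      congr 2
      omega
    rw [h2] at h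
    exact List.append_left_injective _ h
  · exfalso
    have h2 : List.replicate L bb = (List.replicate (L - k - 1) bb ++ [bb]) ++ List.replicate k bb := by
      rw [List.append_assoc, ← List.replicate_one (a := bb), ← List.replicate_add,
        ← List.replicate_add]
      congr 1
      omega
    rw [h2, ← List.append_assoc] at h
    have h3 : c₁ ++ (List.replicate (L - k - 1) bb ++ [bb]) = u := by
      exact List.append_left_injective (List.replicate k bb) h
    rw [← h3] at hlast
    rw [← List.append_assoc, List.getLast?_concat] at hlast
    exact hlast rfl

lemma replicate_shuffle {i j : ℕ} {w : List α} (h : Shuffle (List.replicate i bb) (List.replicate j bb) w) :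
    w = List.replicate (i + j) bb := by
  have := shuffle_perm h
  rw [← List.replicate_add] at this
  exact List.perm_replicate.mp this

lemma key (hlast : u.getLast? ≠ some bb) (k : ℕ) :
    ∀ n x p s' q t, x.getLast? ≠ some bb →
      Pow (u ++ List.replicate k bb) n t →
      Shuffle (x ++ List.replicate p bb) t (s' ++ List.replicate q bb) →
      ∃ d e t₀, q + d = p + n * k ∧ Pow u n e ∧
        Shuffle e (List.replicate d bb) t₀ ∧ Shuffle x t₀ s' := by
  intro n
  induction n with
  | zero =>
    intro x p s' q t hx ht hsh
    rw [ht] at hsh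
    have heq : s' ++ List.replicate q bb = x ++ List.replicate p bb :=
      shuffle_nil_right_eq hsh
    have hqp : q ≤ p := by
      by_contra hqp
      have h2 : List.replicate q bb = (List.replicate (q - p - 1) bb ++ [bb]) ++ List.replicate p bb := by
        rw [List.append_assoc, ← List.replicate_one (a := bb), ← List.replicate_add,
          ← List.replicate_add]
        congr 1
        omega
      rw [h2, ← List.append_assoc] at heq
      have h3 : s' ++ (List.replicate (q - p - 1) bb ++ [bb]) = x := by
        exact List.append_left_injective (List.replicate p bb) heq
      rw [← h3, ← List.append_assoc, List.getLast?_concat] at hx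
      exact hx rfl
    have h2 : x ++ List.replicate p bb = (x ++ List.replicate (p - q) bb) ++ List.replicate q bb := by
      rw [List.append_assoc, ← List.replicate_add]
      congr 2
      omega
    rw [h2] at heq
    have h3 : s' = x ++ List.replicate (p - q) bb :=
      List.append_left_injective _ heq
    refine ⟨p - q, [], List.replicate (p - q) bb, by omega, rfl, shuffle_nil_left _, ?_⟩
    rw [h3]
    exact shuffle_concat _ _
  | succ m ih =>
    rintro x p s' q t hx ⟨t', ht', htsh⟩ hsh
    -- pull the last copy out
    obtain ⟨s, hs1, hs2⟩ := shuffle_assoc2 htsh hsh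
    -- split the last shuffle at the boundary
    obtain ⟨s₁, s₂, c₁, c₂, hsd, hcd, hsp1, hsp2⟩ := shuffle_split hs2 s' (List.replicate q bb) rfl
    -- s₂ and c₂ are blocks of b's
    have hperm := shuffle_perm hsp2
    have hmem : ∀ y ∈ s₂ ++ c₂, y = bb := by
      intro y hy
      have := hperm.symm.subset hy
      exact List.eq_of_mem_replicate this
    have hs₂ : s₂ = List.replicate s₂.length bb :=
      List.eq_replicate_iff.mpr ⟨rfl, fun y hy => hmem y (List.mem_append_left _ hy)⟩
    have hc₂ : c₂ = List.replicate c₂.length bb :=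
      List.eq_replicate_iff.mpr ⟨rfl, fun y hy => hmem y (List.mem_append_right _ hy)⟩
    have hlen : s₂.length + c₂.length = q := by
      have := hperm.length_eq
      simp at this
      omega
    -- identify c₁
    rw [hc₂] at hcd
    obtain ⟨hLc, hc₁⟩ := replicate_suffix_eq hlast hcd.symm
    -- apply IH
    rw [hsd, hs₂] at hs1
    obtain ⟨d₀, e₀, t₀, hd₀, he₀, hsh₀, hx₀⟩ := ih x p s₁ s₂.length t' hx ht' hs1
    -- recombine
    rw [hc₁] at hsp1
    obtain ⟨r, hr1, hr2⟩ := shuffle_assoc1 hx₀ hsp1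
    obtain ⟨s₃, hs₃1, hs₃2⟩ := shuffle_assoc2 (shuffle_concat u (List.replicate (k - c₂.length) bb)) hr1
    obtain ⟨e₁, he₁1, he₁2⟩ := shuffle_assoc1 (shuffle_comm hsh₀) hs₃1
    obtain ⟨r₂, hr₂1, hr₂2⟩ := shuffle_assoc1 (shuffle_comm he₁2) hs₃2
    rw [replicate_shuffle hr₂1] at hr₂2
    have hmk : (m + 1) * k = m * k + k := by ring
    refine ⟨d₀ + (k - c₂.length), e₁, r, by omega, ⟨e₀, he₀, he₁1⟩, hr₂2, hr2⟩

end Aux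

theorem stmt8 {α : Type*} (bb : α) (u : List α) (hlast : u.getLast? ≠ some bb)
    (hnw : ¬ IsWqoOn (DerivesStar {u}) (LL {u})) (k : ℕ) (hk : 1 ≤ k) :
    ¬ IsWqoOn (DerivesStar {u ++ List.replicate k bb}) (LL {u ++ List.replicate k bb}) := by
  unfold IsWqoOn at hnw ⊢
  push_neg at hnw ⊢
  obtain ⟨f, hfL, hfbad⟩ := hnw
  -- each f n is a shuffle power of u
  have hfp : ∀ n, ∃ m, Pow u m (f n) := by
    intro n
    obtain ⟨m, t, hp, hsh⟩ := derivesStar_to_pow (hfL n)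
    rw [shuffle_nil_left_eq hsh]
    exact ⟨m, hp⟩
  choose m hm using hfp
  refine ⟨fun n => f n ++ List.replicate (k * m n) bb, ?_, ?_⟩
  · intro n
    exact pow_to_derivesStar (pow_lift (hm n)) (shuffle_nil_left _)
  · intro i j hij hder
    obtain ⟨n, t, hp, hsh⟩ := derivesStar_to_pow hder
    obtain ⟨d, e, t₀, hd, he, hsh₀, hsh₁⟩ :=
      key hlast k n (f i) (k * m i) (f j) (k * m j) t (pow_getLast hlast (hm i)) hp hsh
    -- length bookkeeping: m j = m i + n, hence d = 0
    have hlen := shuffle_length hsh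
    have hli : (f i).length = m i * u.length := pow_length (hm i)
    have hlj : (f j).length = m j * u.length := pow_length (hm j)
    have hlt : t.length = n * (u.length + k) := by
      have := pow_length hp
      simpa using this
    have hmj : m j = m i + n := by
      simp only [List.length_append, List.length_replicate, hli, hlj, hlt] at hlen
      have h1 : m j * (u.length + k) = (m i + n) * (u.length + k) := by ring_nf; ring_nf at hlen; omega
      have hpos : 0 < u.length + k := by omega
      exact Nat.eq_of_mul_eq_mul_right hpos h1
    have hd0 : d = 0 := by
      rw [hmj] at hd
      have : k * (m i + n) = k * m i + n * k := by ring
      omega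
    rw [hd0, List.replicate_zero] at hsh₀
    rw [shuffle_nil_right_eq hsh₀] at hsh₁
    exact hfbad i j hij (pow_to_derivesStar he hsh₁)

end ShuffleWqo
end

section
/- Let n ≥ 1 be an integer. For a word w over {a,b}, the following three assertions are equivalent: (1) w ∈ LL({a^n b, a^n}); (2) |w|_a ≡ 0 (mod n) and for every prefix p of w one has |p|_a ≥ n·|p|_b; (3) w ∈ L_{{a^n b, a^n}}^ε. In particular LL({a^n b, a^n}) = L_{{a^n b, a^n}}^ε. -/
/-!
Both languages consist exactly of the words with a multiple of `n` letters `a` in which every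
prefix has at least `n` letters `a` per letter `b`. This condition holds for both generators and
survives shuffling, since a prefix of a shuffle is a shuffle of prefixes; so it holds on `LL`.
Conversely, a word satisfying it is either `a^(nj)`, or its first `b` is preceded by at least `n`
letters `a`; then `a^n b` is a factor, and deleting it keeps the condition because that factor has
exactly `n` letters `a` per letter `b`. Induction on the number of `b`s gives a derivation in the unitary grammar, and every
insertion is a shuffle, which closes the cycle.
-/

namespace ShuffleWqo

open AB

/-- One step of the unitary grammar: insert a word of `I` as a factor. -/
def Inserts {α : Type*} (I : Set (List α)) (v w : List α) : Prop :=
  ∃ u ∈ I, ∃ v₁ v₂ : List α, v = v₁ ++ v₂ ∧ w = v₁ ++ u ++ v₂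

/-- The language `L_I^ε` generated by the unitary grammar associated with `I`. -/
def LEps {α : Type*} (I : Set (List α)) : Set (List α) :=
  { w | Relation.ReflTransGen (Inserts I) [] w }

namespace Shuffle

variable {α : Type*}

lemma nil_right : ∀ l : List α, Shuffle l [] l
  | [] => .nil
  | _ :: t => .left (nil_right t)

lemma append_insert : ∀ (v₁ u v₂ : List α), Shuffle (v₁ ++ v₂) u (v₁ ++ u ++ v₂)
  | _ :: t, u, v₂ => .left (append_insert t u v₂)
  | [], [], v₂ => nil_right v₂
  | [], _ :: t, v₂ => .right (append_insert [] t v₂)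

lemma count_eq [DecidableEq α] {u v w : List α} (h : Shuffle u v w) (x : α) :
    w.count x = u.count x + v.count x := by
  induction h with
  | nil => rfl
  | left _ ih => simp only [List.count_cons, ih]; omega
  | right _ ih => simp only [List.count_cons, ih]; omega

lemma exists_prefix {u v w : List α} (h : Shuffle u v w) {p : List α} (hp : p <+: w) :
    ∃ p₁ p₂, p₁ <+: u ∧ p₂ <+: v ∧ Shuffle p₁ p₂ p := by
  induction h generalizing p with
  | nil => exact ⟨[], [], List.nil_prefix, List.nil_prefix, List.prefix_nil.mp hp ▸ .nil⟩
  | left _ ih =>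
    rcases List.prefix_cons_iff.mp hp with rfl | ⟨p', rfl, hp'⟩
    · exact ⟨[], [], List.nil_prefix, List.nil_prefix, .nil⟩
    · obtain ⟨p₁, p₂, h₁, h₂, hs⟩ := ih hp'
      exact ⟨_ :: p₁, p₂, List.cons_prefix_cons.mpr ⟨rfl, h₁⟩, h₂, .left hs⟩
  | right _ ih =>
    rcases List.prefix_cons_iff.mp hp with rfl | ⟨p', rfl, hp'⟩
    · exact ⟨[], [], List.nil_prefix, List.nil_prefix, .nil⟩
    · obtain ⟨p₁, p₂, h₁, h₂, hs⟩ := ih hp'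
      exact ⟨p₁, _ :: p₂, h₁, List.cons_prefix_cons.mpr ⟨rfl, h₂⟩, .right hs⟩

end Shuffle

lemma LEps_subset_LL {α : Type*} (I : Set (List α)) : LEps I ⊆ LL I := fun _ h =>
  Relation.ReflTransGen.mono (fun _ _ ⟨u, hu, v₁, v₂, hv, hw⟩ =>
    ⟨u, hu, hv ▸ hw ▸ Shuffle.append_insert v₁ u v₂⟩) _ _ h

lemma prefix_append_cases {α : Type*} {p x y : List α} (h : p <+: x ++ y) :
    p <+: x ∨ ∃ q, q <+: y ∧ p = x ++ q := by
  rcases List.prefix_or_prefix_of_prefix h (List.prefix_append x y) with hpx | ⟨q, rfl⟩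
  · exact .inl hpx
  · exact .inr ⟨q, (List.prefix_append_right_inj x).mp h, rfl⟩

def PrefixDominated (n : ℕ) (w : List AB) : Prop :=
  ∀ p : List AB, p <+: w → n * p.count b ≤ p.count a

def Balanced (n : ℕ) (w : List AB) : Prop :=
  w.count a % n = 0 ∧ PrefixDominated n w

section Balance

variable {n : ℕ}

lemma prefixDominated_of_b_not_mem {w : List AB} (hw : b ∉ w) : PrefixDominated n w :=
  fun p hp => by
    rw [List.count_eq_zero.mpr fun hb => hw (hp.subset hb)]
    omega

lemma prefixDominated_wa_append_b : PrefixDominated n (wa n ++ [b]) := by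
  intro p hp
  rcases List.prefix_concat_iff.mp hp with rfl | hp
  · simp [wa, List.count_replicate]
  · exact prefixDominated_of_b_not_mem (by simp [wa]) p hp

lemma PrefixDominated.shuffle {u v w : List AB} (hu : PrefixDominated n u)
    (hv : PrefixDominated n v) (h : Shuffle u v w) : PrefixDominated n w := by
  intro p hp
  obtain ⟨p₁, p₂, h₁, h₂, hs⟩ := h.exists_prefix hp
  have := hu p₁ h₁
  have := hv p₂ h₂
  rw [hs.count_eq a, hs.count_eq b, Nat.mul_add]
  omega

lemma PrefixDominated.of_append_append {x u y : List AB}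
    (h : PrefixDominated n (x ++ u ++ y)) (hu : u.count a = n * u.count b) :
    PrefixDominated n (x ++ y) := by
  intro p hp
  rcases prefix_append_cases hp with hpx | ⟨q, hq, rfl⟩
  · exact h p (hpx.trans (List.prefix_append_of_prefix (List.prefix_append x u)))
  · have := h (x ++ u ++ q) (by simpa using hq)
    simp only [List.count_append, Nat.mul_add] at this ⊢
    omega

lemma Balanced.shuffle {u v w : List AB} (hu : Balanced n u) (hv : Balanced n v)
    (h : Shuffle u v w) : Balanced n w :=
  ⟨by rw [h.count_eq a, Nat.add_mod, hu.1, hv.1, Nat.zero_mod],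
    hu.2.shuffle hv.2 h⟩

lemma balanced_of_mem_gens {u : List AB} (hu : u ∈ ({wa n ++ [b], wa n} : Set (List AB))) :
    Balanced n u := by
  rcases hu with rfl | rfl
  · exact ⟨by simp [wa], prefixDominated_wa_append_b⟩
  · exact ⟨by simp [wa], prefixDominated_of_b_not_mem (by simp [wa])⟩

lemma balanced_of_mem_LL {w : List AB} (h : w ∈ LL {wa n ++ [b], wa n}) : Balanced n w := by
  induction h with
  | refl => exact ⟨rfl, fun p hp => by simp [List.prefix_nil.mp hp]⟩
  | tail _ hstep ih =>
    obtain ⟨u, hu, hs⟩ := hstep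
    exact ih.shuffle (balanced_of_mem_gens hu) hs

lemma exists_eq_replicate_a_append_b_cons :
    ∀ {w : List AB}, b ∈ w → ∃ m w', w = List.replicate m a ++ b :: w'
  | b :: w', _ => ⟨0, w', rfl⟩
  | a :: w, hw => by
    obtain ⟨m, w', rfl⟩ :=
      exists_eq_replicate_a_append_b_cons (List.mem_of_ne_of_mem (by decide) hw)
    exact ⟨m + 1, w', rfl⟩

lemma eq_replicate_a_of_b_not_mem {w : List AB} (hw : b ∉ w) :
    w = List.replicate (w.count a) a := by
  have hall : ∀ x ∈ w, x = a := fun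
    | a, _ => rfl
    | b, hx => absurd hx hw
  rw [List.count_eq_length.mpr fun x hx => (hall x hx).symm]
  exact List.eq_replicate_length.mpr hall

lemma replicate_mul_mem_LEps (j : ℕ) :
    List.replicate (n * j) a ∈ LEps {wa n ++ [b], wa n} := by
  induction j with
  | zero => exact Relation.ReflTransGen.refl
  | succ j ih =>
    refine ih.tail ⟨wa n, .inr rfl, [], _, rfl, ?_⟩
    rw [Nat.mul_succ, Nat.add_comm, List.replicate_add]
    rfl

lemma mem_LEps_of_balanced {w : List AB} (h : Balanced n w) :
    w ∈ LEps {wa n ++ [b], wa n} := by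
  induction hk : w.count b generalizing w with
  | zero =>
    rw [eq_replicate_a_of_b_not_mem (List.count_eq_zero.mp hk),
      ← Nat.mul_div_cancel' (Nat.dvd_of_mod_eq_zero h.1)]
    exact replicate_mul_mem_LEps _
  | succ k ih =>
    obtain ⟨m, w', rfl⟩ := exists_eq_replicate_a_append_b_cons
      (List.count_pos_iff.mp (by omega : 0 < w.count b))
    have hnm : n ≤ m := by
      simpa [List.count_replicate] using h.2 (List.replicate m a ++ [b]) ⟨w', by simp⟩
    have hsplit : List.replicate m a ++ b :: w' =
        List.replicate (m - n) a ++ (wa n ++ [b]) ++ w' := by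
      rw [wa, ← List.append_assoc, ← List.replicate_add, Nat.sub_add_cancel hnm]
      simp
    rw [hsplit] at h ⊢
    have hv : Balanced n (List.replicate (m - n) a ++ w') := by
      have hcount : (List.replicate (m - n) a ++ (wa n ++ [b]) ++ w').count a =
          (List.replicate (m - n) a ++ w').count a + n := by
        simp only [wa, List.count_append, List.count_replicate_self, List.count_singleton',
          reduceCtorEq, if_false]
        omega
      refine ⟨?_, h.2.of_append_append (by simp [wa, List.count_replicate])⟩
      rw [← Nat.add_mod_right, ← hcount]
      exact h.1
    exact (ih hv (by simpa [List.count_replicate] using hk)).tail ⟨_, .inl rfl, _, _, rfl, rfl⟩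

end Balance

theorem stmt12_general (n : ℕ) (w : List AB) :
    ((w ∈ LL {wa n ++ [b], wa n}) ↔
      (w.count a % n = 0 ∧ ∀ p : List AB, p <+: w → n * p.count b ≤ p.count a)) ∧
    ((w.count a % n = 0 ∧ ∀ p : List AB, p <+: w → n * p.count b ≤ p.count a) ↔
      w ∈ LEps {wa n ++ [b], wa n}) ∧
    LL {wa n ++ [b], wa n} = LEps {wa n ++ [b], wa n} :=
  ⟨⟨balanced_of_mem_LL, fun h => LEps_subset_LL _ (mem_LEps_of_balanced h)⟩,
    ⟨mem_LEps_of_balanced, fun h => balanced_of_mem_LL (LEps_subset_LL _ h)⟩,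
    (Set.Subset.antisymm (fun _ h => mem_LEps_of_balanced (balanced_of_mem_LL h))
      (LEps_subset_LL _))⟩

theorem stmt12 (n : ℕ) (hn : 1 ≤ n) (w : List AB) :
    ((w ∈ LL {wa n ++ [b], wa n}) ↔
      (w.count a % n = 0 ∧ ∀ p : List AB, p <+: w → n * p.count b ≤ p.count a)) ∧
    ((w.count a % n = 0 ∧ ∀ p : List AB, p <+: w → n * p.count b ≤ p.count a) ↔
      w ∈ LEps {wa n ++ [b], wa n}) ∧
    LL {wa n ++ [b], wa n} = LEps {wa n ++ [b], wa n} :=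
  stmt12_general n w

end ShuffleWqo
end
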